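/- For n ≥ 3, the bubble-sort star graph BS_n is (2n−5)-edge-fault-tolerant strongly Menger edge connected: for any edge set F_e with |F_e| ≤ 2n − 5 and any two distinct vertices u, v, the graph BS_n − F_e contains min{d_{BS_n−F_e}(u), d_{BS_n−F_e}(v)} pairwise edge-disjoint paths joining u and v. -/

import Mathlib

open SimpleGraph

/-- Adjacency relation of the bubble-sort star graph: `y` is obtained from `x` by
swapping the symbols at positions `i` and `j` (0-indexed), where either `j = i+1`
(an adjacent transposition, i.e. positions `k-1, k` for `k ∈ [2,n]`) or `i = 0`
(a star transposition, i.e. positions `1, k` for `k ∈ [2,n]`). -/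
def BSRel (n : ℕ) (x y : Equiv.Perm (Fin n)) : Prop :=
  ∃ i j : Fin n, (j.val = i.val + 1 ∨ i.val = 0) ∧ i ≠ j ∧ y = x * Equiv.swap i j

/-- The n-dimensional bubble-sort star graph `BS_n` on the permutations of `{1,…,n}`. -/
def BS (n : ℕ) : SimpleGraph (Equiv.Perm (Fin n)) :=
  SimpleGraph.fromRel (BSRel n)

/-- The degree of a vertex, as the cardinality of its neighbour set. -/
noncomputable def deg {V : Type*} (G : SimpleGraph V) (v : V) : ℕ :=
  (G.neighborSet v).ncard

/-- `G` contains `m` pairwise edge-disjoint paths joining `u` and `v`. -/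
def HasEdgeDisjointPaths {V : Type*} (G : SimpleGraph V) (u v : V) (m : ℕ) : Prop :=
  ∃ P : Fin m → G.Path u v, ∀ i j : Fin m, i ≠ j →
    List.Disjoint ((P i : G.Walk u v).edges) ((P j : G.Walk u v).edges)

/-!
By the edge version of Menger's theorem it suffices to show that in `BS_n - F` every vertex set
`A` with `u ∈ A`, `v ∉ A` has at least `min (d u) (d v)` boundary edges. Menger's theorem is
obtained from integral flows with unit capacities: augmenting along paths of the residual graph
either raises the value of a flow or exhibits a cut as small as the flow value, and a flow of
value `k` peels off into `k` edge-disjoint paths.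

Every vertex keeps degree at least `(2n - 3) - (2n - 5) = 2` in `BS_n - F`, so a set `A` with one
or two vertices (or whose complement is that small) has at least `d u` (or `d v`) boundary edges:
two vertices can only lose the edge between them. For `|A|, |Aᶜ| ≥ 3` the bound comes from the
isoperimetric inequality `|∂A| ≥ 4n - 8` in `BS_n`, which leaves `2n - 3` boundary edges after
deleting `F`. It is proved by induction on `n`, splitting `BS_(k+1)` by the last symbol into
`k + 1` copies of `BS_k`. Swapping the last position with the first or the penultimate one gives
every vertex two further neighbours, in two distinct other copies. A copy meeting both `A` and
`Aᶜ` contributes `2k - 3` boundary edges (`4k - 8` when both parts have at least two vertices); a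
copy inside `A` and a copy inside `Aᶜ` are joined by at least four of the extra edges; and if no
copy lies inside `A` and `A` meets `m ≤ 2` copies, every vertex of `A` has `3 - m` extra
neighbours outside `A`. Up to exchanging `A` and `Aᶜ`, these cases add up to `4(k + 1) - 8`.
The case `n = 3` holds because `BS_n` is bipartite, hence triangle-free.
-/

open Finset Equiv

lemma Fin.cons_pairwise {α : Type*} {r : α → α → Prop} (hr : ∀ x y, r x y → r y x) {m : ℕ}
    {a : α} {f : Fin m → α} (ha : ∀ i, r a (f i)) (hf : ∀ i j, i ≠ j → r (f i) (f j)) :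
    ∀ i j : Fin (m + 1), i ≠ j →
      r ((Fin.cons a f : Fin (m + 1) → α) i) ((Fin.cons a f : Fin (m + 1) → α) j) := by
  intro i j hij
  induction i using Fin.cases <;> induction j using Fin.cases
  · exact absurd rfl hij
  · exact ha _
  · exact hr _ _ (ha _)
  · exact hf _ _ fun h => hij (congrArg _ h)

lemma Equiv.Perm.exists_apply_eq_apply_eq {α : Type*} [DecidableEq α] {p q a b : α} (hpq : p ≠ q)
    (hab : a ≠ b) : ∃ x : Perm α, x p = a ∧ x q = b := by
  have hq : swap p a q ≠ a := fun h =>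
    hpq ((swap p a).injective (h.trans (swap_apply_left p a).symm)).symm
  refine ⟨swap (swap p a q) b * swap p a, ?_, by simp⟩
  rw [Perm.mul_apply, swap_apply_left, swap_apply_of_ne_of_ne hq.symm hab]

lemma Equiv.Perm.two_le_card_filter_apply_eq_apply_eq {α : Type*} [Fintype α] [DecidableEq α]
    (hα : 4 ≤ Fintype.card α) {p q a b : α} (hpq : p ≠ q) (hab : a ≠ b) :
    2 ≤ #{x : Perm α | x p = a ∧ x q = b} := by
  obtain ⟨x, hxp, hxq⟩ := exists_apply_eq_apply_eq hpq hab
  obtain ⟨r, hr, s, hs, hrs⟩ := one_lt_card.1 (show 1 < #({p, q}ᶜ : Finset α) by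
    rw [card_compl, card_pair hpq]; omega)
  simp only [mem_compl, mem_insert, mem_singleton, not_or] at hr hs
  refine one_lt_card.2 ⟨x, by simp [hxp, hxq], x * swap r s, ?_, fun h => hrs ?_⟩
  · simp [swap_apply_of_ne_of_ne (Ne.symm hr.1) (Ne.symm hs.1),
      swap_apply_of_ne_of_ne (Ne.symm hr.2) (Ne.symm hs.2), hxp, hxq]
  · simpa using congrArg (· r) h

namespace SimpleGraph

/-! ### Edge boundaries -/

section Boundary

variable {V : Type*} (G : SimpleGraph V) [DecidableRel G.Adj]

lemma card_interedges_eq_sum (s t : Finset V) :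
    #(G.interedges s t) = ∑ a ∈ s, #{b ∈ t | G.Adj a b} := by
  simp only [interedges_def, card_filter, sum_product]

lemma cast_card_interedges_eq_sum (s t : Finset V) :
    (#(G.interedges s t) : ℤ) = ∑ a ∈ s, ∑ b ∈ t, if G.Adj a b then 1 else 0 := by
  simp only [card_interedges_eq_sum, card_filter, Nat.cast_sum, Nat.cast_ite, Nat.cast_one,
    Nat.cast_zero]

variable [Fintype V]

lemma deg_eq_degree (v : V) : deg G v = G.degree v := by
  rw [deg, ← card_neighborFinset_eq_degree, ← Set.ncard_coe_finset, coe_neighborFinset]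

variable [DecidableEq V]

lemma degree_eq_card_filter_add_card_filter_compl (A : Finset V) (a : V) :
    G.degree a = #{b ∈ A | G.Adj a b} + #{b ∈ Aᶜ | G.Adj a b} := by
  rw [← card_neighborFinset_eq_degree, neighborFinset_eq_filter, ← card_union_of_disjoint
    (disjoint_filter_filter disjoint_compl_right), ← filter_union, union_compl]

lemma sum_degree_eq_card_interedges_add (A : Finset V) :
    ∑ a ∈ A, G.degree a = #(G.interedges A Aᶜ) + #(G.interedges A A) := by
  rw [card_interedges_eq_sum, card_interedges_eq_sum, ← sum_add_distrib]
  exact sum_congr rfl fun a _ => by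
    rw [degree_eq_card_filter_add_card_filter_compl G A, add_comm]

lemma card_interedges_singleton_compl (u : V) : #(G.interedges {u} {u}ᶜ) = G.degree u := by
  have hloop : G.interedges {u} {u} = ∅ := by
    ext ⟨a, b⟩
    simp only [mk_mem_interedges_iff, mem_singleton, notMem_empty, iff_false]
    rintro ⟨rfl, rfl, h⟩
    exact G.loopless.irrefl _ h
  simpa [hloop] using (G.sum_degree_eq_card_interedges_add {u}).symm

lemma card_interedges_compl_comm (A : Finset V) :
    #(G.interedges Aᶜ Aᶜᶜ) = #(G.interedges A Aᶜ) := by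
  have : Std.Symm G.Adj := ⟨fun _ _ h => h.symm⟩
  rw [compl_compl]
  exact Rel.card_interedges_comm _ _

lemma degree_add_degree_le_card_interedges_pair {u w : V} (huw : u ≠ w) :
    G.degree u + G.degree w ≤ #(G.interedges {u, w} {u, w}ᶜ) + 2 := by
  have hsub : G.interedges {u, w} {u, w} ⊆ {(u, w), (w, u)} := by
    rintro ⟨a, b⟩ h
    simp only [mk_mem_interedges_iff, mem_insert, mem_singleton, Prod.mk.injEq] at h ⊢
    obtain ⟨rfl | rfl, rfl | rfl, hab⟩ := h <;> simp_all
  have := G.sum_degree_eq_card_interedges_add {u, w}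
  rw [sum_pair huw] at this
  have := (card_le_card hsub).trans (card_le_two (a := (u, w)) (b := (w, u)))
  omega

lemma sum_degree_le_card_interedges_of_cliqueFree (hG : G.CliqueFree 3) {A : Finset V}
    (hA : #A = 3) : ∑ a ∈ A, G.degree a ≤ #(G.interedges A Aᶜ) + 4 := by
  suffices key : ∀ x y z : V, ¬G.Adj y z → #(G.interedges {x, y, z} {x, y, z}) ≤ 4 by
    rw [sum_degree_eq_card_interedges_add, add_le_add_iff_left]
    obtain ⟨x, y, z, hxy, hxz, hyz, rfl⟩ := card_eq_three.1 hA
    by_cases hyz' : G.Adj y z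
    · by_cases hxz' : G.Adj x z
      · have hxy' : ¬G.Adj x y := fun hxy' =>
          hG {x, y, z} (is3Clique_triple_iff.2 ⟨hxy', hxz', hyz'⟩)
        rw [show ({x, y, z} : Finset V) = {z, x, y} by ext; simp; tauto]
        exact key z x y hxy'
      · rw [show ({x, y, z} : Finset V) = {y, x, z} by ext; simp; tauto]
        exact key y x z hxz'
    · exact key x y z hyz'
  intro x y z hyz
  have hsub : G.interedges {x, y, z} {x, y, z} ⊆ {(x, y), (y, x), (x, z), (z, x)} := by
    rintro ⟨a, b⟩ h
    simp only [mk_mem_interedges_iff, mem_insert, mem_singleton, Prod.mk.injEq] at h ⊢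
    obtain ⟨rfl | rfl | rfl, rfl | rfl | rfl, hab⟩ := h <;> simp_all [G.adj_comm]
  exact (card_le_card hsub).trans (card_insert_le _ _ |>.trans (by
    grw [card_insert_le, card_le_two]))

lemma card_interedges_le_card_interedges_deleteEdges_add (F : Set (Sym2 V))
    [DecidableRel (G.deleteEdges F).Adj] (A : Finset V) :
    #(G.interedges A Aᶜ) ≤ #((G.deleteEdges F).interedges A Aᶜ) + F.ncard := by
  classical
  set X := {p ∈ G.interedges A Aᶜ | s(p.1, p.2) ∈ F}
  have hsub : G.interedges A Aᶜ ⊆ (G.deleteEdges F).interedges A Aᶜ ∪ X := by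
    rintro ⟨a, b⟩ h
    by_cases hF : s(a, b) ∈ F
    · exact mem_union_right _ (mem_filter.2 ⟨h, hF⟩)
    · rw [G.mk_mem_interedges_iff] at h
      exact mem_union_left _
        ((G.deleteEdges F).mk_mem_interedges_iff.2 ⟨h.1, h.2.1, deleteEdges_adj.2 ⟨h.2.2, hF⟩⟩)
  have hX : #X ≤ F.ncard := by
    rw [← Set.ncard_coe_finset]
    refine Set.ncard_le_ncard_of_injOn (fun p => s(p.1, p.2)) (fun p hp => (mem_filter.1 hp).2) ?_
    rintro ⟨a, b⟩ hp ⟨c, d⟩ hq hpq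
    simp only [X, coe_filter, Set.mem_ofPred_eq, G.mk_mem_interedges_iff, mem_compl] at hp hq
    rcases Sym2.eq_iff.1 hpq with ⟨rfl, rfl⟩ | ⟨rfl, rfl⟩
    · rfl
    · exact absurd hq.1.1 hp.1.2.1
  exact (card_le_card hsub).trans ((card_union_le _ _).trans (by omega))

lemma degree_le_degree_deleteEdges_add (F : Set (Sym2 V)) [DecidableRel (G.deleteEdges F).Adj]
    (v : V) : G.degree v ≤ (G.deleteEdges F).degree v + F.ncard := by
  simpa only [card_interedges_singleton_compl] using
    G.card_interedges_le_card_interedges_deleteEdges_add F {v}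

lemma degree_le_card_interedges_of_card_le_two {u : V} {A : Finset V}
    (hdeg : ∀ w, 2 ≤ G.degree w) (hu : u ∈ A) (hA : #A ≤ 2) :
    G.degree u ≤ #(G.interedges A Aᶜ) := by
  rcases (by have := card_pos.2 ⟨u, hu⟩; omega : #A = 1 ∨ #A = 2) with hA | hA
  · obtain ⟨a, rfl⟩ := card_eq_one.1 hA
    rw [mem_singleton.1 hu, card_interedges_singleton_compl]
  · obtain ⟨a, b, hab, rfl⟩ := card_eq_two.1 hA
    have := G.degree_add_degree_le_card_interedges_pair hab
    rcases mem_insert.1 hu with rfl | hu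
    · linarith [hdeg b]
    · rw [mem_singleton.1 hu]
      linarith [hdeg a]

end Boundary

/-! ### Menger's theorem for edge cuts -/

namespace Walk

variable {V : Type*} [DecidableEq V] {G : SimpleGraph V} {u v : V}

/-- The net number of times `p` traverses the edge `s(a, b)` from `a` to `b`. -/
def arcFlow (p : G.Walk u v) (a b : V) : ℤ :=
  ((p.darts.map Dart.toProd).count (a, b) : ℤ) - (p.darts.map Dart.toProd).count (b, a)

lemma arcFlow_swap (p : G.Walk u v) (a b : V) : p.arcFlow b a = -p.arcFlow a b := by
  simp only [arcFlow]; ring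

lemma sum_arcFlow [Fintype V] (p : G.Walk u v) (w : V) :
    ∑ b, p.arcFlow w b = (if w = u then 1 else 0) - (if w = v then 1 else 0) := by
  induction p with
  | nil => simp [arcFlow]
  | @cons u x v h p ih =>
    have hsplit : ∀ b, (cons h p).arcFlow w b = p.arcFlow w b +
        ((if u = w ∧ x = b then 1 else 0) - (if u = b ∧ x = w then 1 else 0)) := by
      intro b
      simp only [arcFlow, darts_cons, List.map_cons, List.count_cons, beq_iff_eq, Prod.mk.injEq]
      push_cast; ring
    have h1 : ∑ b, (if u = w ∧ x = b then (1 : ℤ) else 0) = if w = u then 1 else 0 := by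
      by_cases hu : w = u <;> simp [hu, Ne.symm]
    have h2 : ∑ b, (if u = b ∧ x = w then (1 : ℤ) else 0) = if w = x then 1 else 0 := by
      by_cases hx : w = x <;> simp [hx, Ne.symm]
    simp only [hsplit, sum_add_distrib, sum_sub_distrib, ih, h1, h2]
    ring

lemma count_add_count_swap (p : G.Walk u v) (a b : V) :
    (p.darts.map Dart.toProd).count (a, b) + (p.darts.map Dart.toProd).count (b, a) =
      p.edges.count s(a, b) := by
  induction p with
  | nil => simp
  | @cons u x v h p ih =>
    simp only [darts_cons, edges_cons, List.map_cons, List.count_cons, beq_iff_eq, ← ih,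
      Sym2.eq_iff, Prod.mk.injEq]
    have hux : u ≠ x := h.ne
    split_ifs <;> grind

lemma IsTrail.count_add_count_swap_le_one {p : G.Walk u v} (hp : p.IsTrail) (a b : V) :
    (p.darts.map Dart.toProd).count (a, b) + (p.darts.map Dart.toProd).count (b, a) ≤ 1 := by
  rw [p.count_add_count_swap]
  exact List.nodup_iff_count_le_one.1 hp.edges_nodup _

lemma mem_darts_of_count_pos {p : G.Walk u v} {a b : V}
    (h : 0 < (p.darts.map Dart.toProd).count (a, b)) : ∃ d ∈ p.darts, d.toProd = (a, b) :=
  List.mem_map.1 (List.count_pos_iff.1 h)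

lemma arcFlow_eq_zero {p : G.Walk u v} {a b : V} (h : s(a, b) ∉ p.edges) :
    p.arcFlow a b = 0 := by
  have := p.count_add_count_swap a b
  rw [List.count_eq_zero_of_not_mem h] at this
  simp only [arcFlow]
  omega

end Walk

variable {V : Type*} [Fintype V] {G : SimpleGraph V} {u v : V}

lemma exists_isPath_or_exists_cut (R : V → V → Prop) (hR : ∀ a b, R a b → G.Adj a b) (u v : V) :
    (∃ p : G.Walk u v, p.IsPath ∧ ∀ d ∈ p.darts, R d.fst d.snd) ∨
      ∃ A : Finset V, u ∈ A ∧ v ∉ A ∧ ∀ a ∈ A, ∀ b ∉ A, ¬R a b := by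
  classical
  by_cases h : Relation.ReflTransGen R u v
  · left
    obtain ⟨p, hp⟩ : ∃ p : G.Walk u v, ∀ d ∈ p.darts, R d.fst d.snd := by
      induction h using Relation.ReflTransGen.head_induction_on with
      | refl => exact ⟨Walk.nil, by simp⟩
      | head hab _ ih =>
        obtain ⟨p, hp⟩ := ih
        exact ⟨Walk.cons (hR _ _ hab) p, by simpa [hab] using hp⟩
    exact ⟨p.bypass, p.bypass_isPath, fun d hd => hp d (p.darts_bypass_subset_darts hd)⟩
  · right
    refine ⟨({w | Relation.ReflTransGen R u w} : Finset V), by simpa using .refl, by simpa, ?_⟩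
    intro a ha b hb hab
    simp only [mem_filter, mem_univ, true_and] at ha hb
    exact hb (ha.tail hab)

variable [DecidableRel G.Adj]

variable (G) in
/-- An integral flow of value `k` from `u` to `v` in which every edge has capacity one in each
direction, encoded as a skew-symmetric function on ordered pairs of vertices. -/
structure IsFlow (u v : V) (k : ℤ) (φ : V → V → ℤ) : Prop where
  skew a b : φ b a = -φ a b
  le_adj a b : φ a b ≤ if G.Adj a b then 1 else 0
  sum_eq_zero w : w ≠ u → w ≠ v → ∑ b, φ w b = 0
  sum_source : ∑ b, φ u b = k

namespace IsFlow

variable {k : ℤ} {φ : V → V → ℤ}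

lemma adj_of_pos (hφ : G.IsFlow u v k φ) {a b : V} (h : 0 < φ a b) : G.Adj a b := by
  by_contra hab
  have := hφ.le_adj a b
  rw [if_neg hab] at this
  omega

variable [DecidableEq V]

lemma sum_cut (hφ : G.IsFlow u v k φ) {A : Finset V} (hu : u ∈ A) (hv : v ∉ A) :
    ∑ a ∈ A, ∑ b ∈ Aᶜ, φ a b = k := by
  have hout : ∑ a ∈ A, ∑ b, φ a b = k := by
    rw [sum_eq_single_of_mem u hu fun w hw hwu => hφ.sum_eq_zero w hwu (ne_of_mem_of_not_mem hw hv)]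
    exact hφ.sum_source
  have hin : ∑ a ∈ A, ∑ b ∈ A, φ a b = 0 := by
    have h : ∑ a ∈ A, ∑ b ∈ A, φ a b = ∑ a ∈ A, ∑ b ∈ A, -φ a b := by
      rw [sum_comm]
      exact sum_congr rfl fun a _ => sum_congr rfl fun b _ => hφ.skew a b
    simp only [sum_neg_distrib] at h
    linarith
  simp only [← sum_add_sum_compl A, sum_add_distrib, hin, zero_add] at hout
  exact hout

lemma add_arcFlow (hφ : G.IsFlow u v k φ) (huv : u ≠ v) (p : G.Walk u v) (c : ℤ)
    (hcap : ∀ a b, φ a b + c * p.arcFlow a b ≤ if G.Adj a b then 1 else 0) :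
    G.IsFlow u v (k + c) fun a b => φ a b + c * p.arcFlow a b where
  skew a b := by rw [hφ.skew, p.arcFlow_swap]; ring
  le_adj := hcap
  sum_eq_zero w hwu hwv := by
    simp [sum_add_distrib, ← mul_sum, p.sum_arcFlow, hφ.sum_eq_zero w hwu hwv, hwu, hwv]
  sum_source := by simp [sum_add_distrib, ← mul_sum, p.sum_arcFlow, hφ.sum_source, huv]

lemma exists_succ (hφ : G.IsFlow u v k φ) (huv : u ≠ v)
    (hcut : ∀ A : Finset V, u ∈ A → v ∉ A → k + 1 ≤ #(G.interedges A Aᶜ)) :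
    ∃ ψ, G.IsFlow u v (k + 1) ψ := by
  have hres : ∀ a b, φ a b < (if G.Adj a b then 1 else 0) → G.Adj a b := by
    intro a b hab
    by_contra h
    rw [if_neg h] at hab
    exact h (hφ.adj_of_pos (by rw [hφ.skew]; omega)).symm
  rcases exists_isPath_or_exists_cut _ hres u v with ⟨p, hp, hpR⟩ | ⟨A, hu, hv, hA⟩
  · refine ⟨_, hφ.add_arcFlow huv p 1 fun a b => ?_⟩
    have hle := hp.isTrail.count_add_count_swap_le_one a b
    have hcap := hφ.le_adj a b
    by_cases hab : 0 < (p.darts.map Dart.toProd).count (a, b)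
    · obtain ⟨d, hd, hda⟩ := p.mem_darts_of_count_pos hab
      have := hpR d hd
      simp only [hda] at this
      simp only [Walk.arcFlow]
      omega
    · simp only [Walk.arcFlow]
      omega
  · have := hcut A hu hv
    have : (#(G.interedges A Aᶜ) : ℤ) ≤ k := by
      rw [cast_card_interedges_eq_sum, ← hφ.sum_cut hu hv]
      exact sum_le_sum fun a ha => sum_le_sum fun b hb => not_lt.1 (hA a ha b (mem_compl.1 hb))
    omega

lemma sub_arcFlow {m : ℕ} (hφ : G.IsFlow u v (m + 1 : ℕ) φ) (huv : u ≠ v) {p : G.Walk u v}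
    (hp : p.IsTrail) (hone : ∀ d ∈ p.darts, φ d.fst d.snd = 1) :
    G.IsFlow u v m (fun a b => φ a b - p.arcFlow a b) ∧
      ∀ a b, s(a, b) ∈ p.edges → φ a b = p.arcFlow a b := by
  have hone' : ∀ a b, 0 < (p.darts.map Dart.toProd).count (a, b) → φ a b = 1 := by
    intro a b hab
    obtain ⟨d, hd, hda⟩ := p.mem_darts_of_count_pos hab
    simpa [hda] using hone d hd
  refine ⟨?_, fun a b hab => ?_⟩
  · have := hφ.add_arcFlow huv p (-1) fun a b => ?_
    · push_cast at this
      simpa [← sub_eq_add_neg] using this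
    have hle := hp.count_add_count_swap_le_one a b
    have hcap := hφ.le_adj a b
    have hcap0 : (0 : ℤ) ≤ if G.Adj a b then 1 else 0 := by split_ifs <;> omega
    simp only [Walk.arcFlow]
    by_cases hba : 0 < (p.darts.map Dart.toProd).count (b, a)
    · have := hone' b a hba
      have := hφ.skew a b
      omega
    · omega
  · have hle := hp.count_add_count_swap_le_one a b
    have hcount := p.count_add_count_swap a b
    have hpos := List.count_pos_iff.2 hab
    simp only [Walk.arcFlow]
    by_cases hba : 0 < (p.darts.map Dart.toProd).count (b, a)
    · have := hone' b a hba
      have := hφ.skew a b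
      omega
    · have := hone' a b (by omega)
      omega

lemma exists_isPath_sub_arcFlow {m : ℕ} (hφ : G.IsFlow u v (m + 1 : ℕ) φ) (huv : u ≠ v) :
    ∃ p : G.Walk u v, p.IsPath ∧ (∀ d ∈ p.darts, 0 < φ d.fst d.snd) ∧
      G.IsFlow u v m (fun a b => φ a b - p.arcFlow a b) ∧
      ∀ a b, s(a, b) ∈ p.edges → φ a b = p.arcFlow a b := by
  rcases exists_isPath_or_exists_cut _ (fun a b => hφ.adj_of_pos) u v with
    ⟨p, hp, hpos⟩ | ⟨A, hu, hv, hA⟩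
  · refine ⟨p, hp, hpos, hφ.sub_arcFlow huv hp.isTrail fun d hd => ?_⟩
    have h1 := hpos d hd
    have h2 := hφ.le_adj d.fst d.snd
    split_ifs at h2 <;> omega
  · have : ∑ a ∈ A, ∑ b ∈ Aᶜ, φ a b ≤ 0 :=
      sum_nonpos fun a ha => sum_nonpos fun b hb => not_lt.1 (hA a ha b (mem_compl.1 hb))
    rw [hφ.sum_cut hu hv] at this
    omega

lemma exists_paths (huv : u ≠ v) : ∀ (k : ℕ) (φ : V → V → ℤ), G.IsFlow u v k φ →
    ∃ P : Fin k → G.Path u v,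
      (∀ i j, i ≠ j → List.Disjoint (P i : G.Walk u v).edges (P j : G.Walk u v).edges) ∧
      ∀ i, ∀ d ∈ (P i : G.Walk u v).darts, 0 < φ d.fst d.snd := by
  intro k
  induction k with
  | zero => exact fun _ _ => ⟨Fin.elim0, fun i => i.elim0, fun i => i.elim0⟩
  | succ k ih =>
    intro φ hφ
    obtain ⟨p, hp, hpos, hψ, hedge⟩ := exists_isPath_sub_arcFlow hφ huv
    obtain ⟨P, hdisj, hPpos⟩ := ih _ hψ
    -- `φ - p.arcFlow` vanishes on the edges of `p`; the `P i` only use arcs where it is positive.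
    refine ⟨Fin.cons ⟨p, hp⟩ P, Fin.cons_pairwise
      (r := fun p q : G.Path u v => List.Disjoint (p : G.Walk u v).edges (q : G.Walk u v).edges)
      (fun _ _ h => h.symm) ?_ hdisj, ?_⟩
    · intro i e hep heP
      obtain ⟨d, hd, rfl⟩ := List.mem_map.1 heP
      have := hedge d.fst d.snd hep
      have := hPpos i d hd
      omega
    · intro i
      induction i using Fin.cases with
      | zero => exact hpos
      | succ i =>
        intro d hd
        have hψd := hPpos i d hd
        by_cases hde : s(d.fst, d.snd) ∈ p.edges
        · have := hedge _ _ hde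
          omega
        · simpa [Walk.arcFlow_eq_zero hde] using hψd

end IsFlow

variable [DecidableEq V]

theorem hasEdgeDisjointPaths_of_le_card_interedges (huv : u ≠ v) (k : ℕ)
    (hcut : ∀ A : Finset V, u ∈ A → v ∉ A → k ≤ #(G.interedges A Aᶜ)) :
    HasEdgeDisjointPaths G u v k := by
  obtain ⟨φ, hφ⟩ : ∃ φ, G.IsFlow u v k φ := by
    induction k with
    | zero => exact ⟨0, ⟨by simp, fun a b => by split_ifs <;> simp, by simp, by simp⟩⟩
    | succ k ih =>
      obtain ⟨φ, hφ⟩ := ih fun A hu hv => (hcut A hu hv).trans' (by omega)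
      exact_mod_cast hφ.exists_succ huv fun A hu hv => by exact_mod_cast hcut A hu hv
  obtain ⟨P, hP, -⟩ := IsFlow.exists_paths huv k φ hφ
  exact ⟨P, hP⟩

variable (G) in
theorem hasEdgeDisjointPaths_min_deg (huv : u ≠ v) (hdeg : ∀ w, 2 ≤ G.degree w)
    (hcut : ∀ A : Finset V, 3 ≤ #A → 3 ≤ #Aᶜ →
      min (G.degree u) (G.degree v) ≤ #(G.interedges A Aᶜ)) :
    HasEdgeDisjointPaths G u v (min (deg G u) (deg G v)) := by
  rw [deg_eq_degree, deg_eq_degree]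
  refine hasEdgeDisjointPaths_of_le_card_interedges huv _ fun A hu hv => ?_
  by_cases hA : #A ≤ 2
  · exact (min_le_left _ _).trans (G.degree_le_card_interedges_of_card_le_two hdeg hu hA)
  by_cases hAc : #Aᶜ ≤ 2
  · rw [← card_interedges_compl_comm]
    exact (min_le_right _ _).trans
      (G.degree_le_card_interedges_of_card_le_two hdeg (mem_compl.2 hv) hAc)
  exact hcut A (by omega) (by omega)

end SimpleGraph

/-! ### The bubble-sort star graph -/

instance (n : ℕ) : DecidableRel (BSRel n) := fun x y => by unfold BSRel; infer_instance

instance (n : ℕ) : DecidableRel (BS n).Adj := fun _ _ =>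
  decidable_of_iff _ (fromRel_adj _ _ _).symm

namespace BS

section Basic

variable {n : ℕ}

lemma adj_iff {x y : Perm (Fin n)} : (BS n).Adj x y ↔ BSRel n x y := by
  refine ⟨fun h => ?_, fun h => ?_⟩
  · obtain ⟨-, h | ⟨i, j, hg, hij, rfl⟩⟩ := (fromRel_adj _ _ _).1 h
    · exact h
    · exact ⟨i, j, hg, hij, by rw [mul_assoc, swap_mul_self, mul_one]⟩
  · obtain ⟨i, j, hg, hij, rfl⟩ := h
    refine (fromRel_adj _ _ _).2 ⟨fun h => hij ?_, Or.inl ⟨i, j, hg, hij, rfl⟩⟩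
    simpa using congrArg (· i) h

lemma adj_mul_swap (x : Perm (Fin n)) {i j : Fin n} (hg : j.val = i.val + 1 ∨ i.val = 0)
    (hij : i ≠ j) : (BS n).Adj x (x * swap i j) :=
  adj_iff.2 ⟨i, j, hg, hij, rfl⟩

lemma sign_eq_neg_of_adj {x y : Perm (Fin n)} (h : (BS n).Adj x y) :
    Perm.sign y = -Perm.sign x := by
  obtain ⟨i, j, -, hij, rfl⟩ := adj_iff.1 h
  rw [Perm.sign_mul, Perm.sign_swap hij, mul_neg_one]

lemma cliqueFree_three : (BS n).CliqueFree 3 := by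
  intro s hs
  obtain ⟨x, y, z, -, -, -, rfl⟩ := card_eq_three.1 hs.card_eq
  obtain ⟨hxy, hxz, hyz⟩ := is3Clique_triple_iff.1 hs
  have h := sign_eq_neg_of_adj hyz
  rw [sign_eq_neg_of_adj hxz, sign_eq_neg_of_adj hxy, neg_neg] at h
  exact units_ne_neg_self _ h.symm

lemma neighborFinset_eq {m : ℕ} (x : Perm (Fin (m + 2))) :
    (BS (m + 2)).neighborFinset x =
      (univ.image fun j : Fin (m + 1) => x * swap 0 j.succ) ∪
        ((univ.erase 0).image fun i : Fin (m + 1) => x * swap i.castSucc i.succ) := by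
  ext y
  simp only [mem_neighborFinset, adj_iff, mem_union, mem_image, mem_univ, true_and, mem_erase,
    and_true]
  constructor
  · rintro ⟨i, j, hg | hg, hij, rfl⟩
    · obtain ⟨i', rfl⟩ : ∃ i' : Fin (m + 1), i'.castSucc = i :=
        ⟨⟨i, by omega⟩, Fin.ext rfl⟩
      obtain rfl : j = i'.succ := Fin.ext (by simpa using hg)
      by_cases hi' : i' = 0
      · exact Or.inl ⟨0, by simp [hi']⟩
      · exact Or.inr ⟨i', hi', rfl⟩
    · obtain rfl : i = 0 := Fin.ext hg
      obtain ⟨j', rfl⟩ := Fin.exists_succ_eq.2 hij.symm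
      exact Or.inl ⟨j', rfl⟩
  · rintro (⟨j, rfl⟩ | ⟨i, -, rfl⟩)
    · exact ⟨0, j.succ, Or.inr rfl, (Fin.succ_ne_zero j).symm, rfl⟩
    · exact ⟨i.castSucc, i.succ, Or.inl (by simp), Fin.castSucc_lt_succ.ne, rfl⟩

lemma degree_eq (hn : 2 ≤ n) (x : Perm (Fin n)) : (BS n).degree x = 2 * n - 3 := by
  obtain ⟨m, rfl⟩ : ∃ m, n = m + 2 := ⟨n - 2, by omega⟩
  have hstar : Function.Injective fun j : Fin (m + 1) => x * swap 0 j.succ :=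
    fun j j' h => Fin.succ_injective _ (swap_injective_of_left 0 (mul_left_cancel h))
  have hbubble : Function.Injective fun i : Fin (m + 1) => x * swap i.castSucc i.succ := by
    intro i i' h
    have := congrArg (· i.castSucc) (mul_left_cancel h)
    simp only [swap_apply_left, swap_apply_def, Fin.ext_iff] at this
    split_ifs at this <;> simp_all [Fin.ext_iff]
    omega
  have hdisj : Disjoint (univ.image fun j : Fin (m + 1) => x * swap 0 j.succ)
      ((univ.erase 0).image fun i : Fin (m + 1) => x * swap i.castSucc i.succ) := by
    simp only [Finset.disjoint_left, mem_image, mem_univ, true_and, mem_erase, and_true,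
      not_exists, not_and]
    rintro _ ⟨j, rfl⟩ i hi h
    have := congrArg (· 0) (mul_left_cancel h)
    simp only [swap_apply_left] at this
    rw [swap_apply_of_ne_of_ne (fun h0 => hi (Fin.castSucc_eq_zero_iff.1 h0.symm))
      (Fin.succ_ne_zero i).symm] at this
    exact Fin.succ_ne_zero j this.symm
  rw [← card_neighborFinset_eq_degree, neighborFinset_eq, card_union_of_disjoint hdisj,
    card_image_of_injective _ hstar, card_image_of_injective _ hbubble, card_erase_of_mem
    (mem_univ _), card_univ, Fintype.card_fin]
  omega

end Basic

def IsoperimetricBound (N : ℕ) : Prop :=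
  ∀ A : Finset (Perm (Fin N)), 3 ≤ #A → 3 ≤ #Aᶜ → 4 * N - 8 ≤ #((BS N).interedges A Aᶜ)

namespace IsoperimetricBound

variable {N : ℕ}

lemma two_mul_sub_three_le (h : IsoperimetricBound N) (hN : 3 ≤ N) {A : Finset (Perm (Fin N))}
    (hA : A.Nonempty) (hAc : Aᶜ.Nonempty) : 2 * N - 3 ≤ #((BS N).interedges A Aᶜ) := by
  have hdeg : ∀ x, (BS N).degree x = 2 * N - 3 := degree_eq (by omega)
  have hdeg2 : ∀ x, 2 ≤ (BS N).degree x := fun x => by rw [hdeg]; omega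
  obtain ⟨u, hu⟩ := hA
  obtain ⟨v, hv⟩ := hAc
  by_cases hsmall : #A ≤ 2
  · exact hdeg u ▸ degree_le_card_interedges_of_card_le_two _ hdeg2 hu hsmall
  by_cases hsmall' : #Aᶜ ≤ 2
  · rw [← card_interedges_compl_comm, ← hdeg v]
    exact degree_le_card_interedges_of_card_le_two _ hdeg2 hv hsmall'
  have := h A (by omega) (by omega)
  omega

lemma four_mul_sub_eight_le (h : IsoperimetricBound N) (hN : 3 ≤ N) {A : Finset (Perm (Fin N))}
    (hA : 2 ≤ #A) (hAc : 2 ≤ #Aᶜ) : 4 * N - 8 ≤ #((BS N).interedges A Aᶜ) := by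
  have hpair : ∀ B : Finset (Perm (Fin N)), #B = 2 → 4 * N - 8 ≤ #((BS N).interedges B Bᶜ) := by
    intro B hB
    obtain ⟨a, b, hab, rfl⟩ := card_eq_two.1 hB
    have := (BS N).degree_add_degree_le_card_interedges_pair hab
    rw [degree_eq (by omega), degree_eq (by omega)] at this
    omega
  by_cases h2 : #A = 2
  · exact hpair A h2
  by_cases h2' : #Aᶜ = 2
  · rw [← card_interedges_compl_comm]
    exact hpair _ h2'
  exact h A (by omega) (by omega)

end IsoperimetricBound

/-! ### Splitting `BS (k + 1)` into copies of `BS k` -/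

variable {k : ℕ}

/-- The permutation with `i` in the last position and the pattern of `σ` on the others:
`embed i` identifies `BS k` with the copy of it inside `BS (k + 1)` formed by the permutations
ending in `i`. -/
def embed (i : Fin (k + 1)) (σ : Perm (Fin k)) : Perm (Fin (k + 1)) :=
  (finSuccEquiv' (Fin.last k)).trans ((optionCongr σ).trans (finSuccEquiv' i).symm)

@[simp]
lemma embed_apply_last (i : Fin (k + 1)) (σ : Perm (Fin k)) : embed i σ (Fin.last k) = i := by
  simp [embed]

@[simp]
lemma embed_apply_castSucc (i : Fin (k + 1)) (σ : Perm (Fin k)) (j : Fin k) :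
    embed i σ j.castSucc = i.succAbove (σ j) := by
  have : finSuccEquiv' (Fin.last k) j.castSucc = some j := by
    rw [← Fin.succAbove_last, finSuccEquiv'_succAbove]
  simp [embed, this]

lemma embed_injective (i : Fin (k + 1)) : Function.Injective (embed i) := fun σ τ h =>
  Equiv.ext fun j => by simpa using congrArg (· j.castSucc) h

lemma exists_embed_eq (x : Perm (Fin (k + 1))) : ∃ σ, embed (x (Fin.last k)) σ = x := by
  set X := ((finSuccEquiv' (Fin.last k)).symm.trans x).trans (finSuccEquiv' (x (Fin.last k)))
  have hX : X none = none := by simp [X]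
  refine ⟨X.removeNone, Equiv.ext fun p => ?_⟩
  induction p using Fin.lastCases with
  | last => simp
  | cast j =>
    have h := Equiv.removeNone_some X (x := j) (by
      cases h : X (some j) with
      | none => exact absurd (X.injective (h.trans hX.symm)) (by simp)
      | some val => exact ⟨val, rfl⟩)
    rw [embed_apply_castSucc, ← finSuccEquiv'_symm_some, h]
    simp [X]

lemma embed_mul_swap (i : Fin (k + 1)) (σ : Perm (Fin k)) (a b : Fin k) :
    embed i σ * swap a.castSucc b.castSucc = embed i (σ * swap a b) := by
  refine Equiv.ext fun p => ?_
  induction p using Fin.lastCases with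
  | last =>
    rw [Perm.mul_apply, swap_apply_of_ne_of_ne (Fin.castSucc_lt_last a).ne'
      (Fin.castSucc_lt_last b).ne', embed_apply_last, embed_apply_last]
  | cast j =>
    rw [Perm.mul_apply, (Fin.castSucc_injective k).swap_apply a b j, embed_apply_castSucc,
      embed_apply_castSucc, Perm.mul_apply]

lemma adj_embed_iff (hk : 0 < k) (i : Fin (k + 1)) (σ τ : Perm (Fin k)) :
    (BS (k + 1)).Adj (embed i σ) (embed i τ) ↔ (BS k).Adj σ τ := by
  simp only [adj_iff, BSRel]
  constructor
  · rintro ⟨c, d, hg, hcd, h⟩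
    have hc : c ≠ Fin.last k := by rintro rfl; simp at hg; omega
    have hd : d ≠ Fin.last k := by
      rintro rfl
      obtain ⟨c', rfl⟩ := Fin.exists_castSucc_eq.2 hc
      have := congrArg (· (Fin.last k)) h
      simp only [embed_apply_last, Perm.mul_apply, swap_apply_right, embed_apply_castSucc] at this
      exact Fin.succAbove_ne i _ this.symm
    obtain ⟨a, rfl⟩ := Fin.exists_castSucc_eq.2 hc
    obtain ⟨b, rfl⟩ := Fin.exists_castSucc_eq.2 hd
    rw [embed_mul_swap] at h
    exact ⟨a, b, by simpa using hg, fun hab => hcd (hab ▸ rfl), embed_injective i h⟩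
  · rintro ⟨a, b, hg, hab, rfl⟩
    exact ⟨a.castSucc, b.castSucc, by simpa using hg, (Fin.castSucc_injective k).ne hab,
      (embed_mul_swap i σ a b).symm⟩

/-- The trace of `A` on the copy of `BS k` formed by the permutations ending in `i`. -/
def slice (A : Finset (Perm (Fin (k + 1)))) (i : Fin (k + 1)) : Finset (Perm (Fin k)) :=
  {σ | embed i σ ∈ A}

@[simp]
lemma mem_slice {A : Finset (Perm (Fin (k + 1)))} {i : Fin (k + 1)} {σ : Perm (Fin k)} :
    σ ∈ slice A i ↔ embed i σ ∈ A := by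
  simp [slice]

lemma slice_compl (A : Finset (Perm (Fin (k + 1)))) (i : Fin (k + 1)) :
    slice Aᶜ i = (slice A i)ᶜ := by
  ext; simp

lemma card_slice (A : Finset (Perm (Fin (k + 1)))) (i : Fin (k + 1)) :
    #(slice A i) = #{x ∈ A | x (Fin.last k) = i} := by
  refine card_nbij (embed i) (fun σ hσ => by simpa using hσ)
    (fun σ _ τ _ h => embed_injective i h) fun x hx => ?_
  simp only [coe_filter, Set.mem_ofPred_eq] at hx
  obtain ⟨σ, hσ⟩ := exists_embed_eq x
  rw [hx.2] at hσ
  exact ⟨σ, by simpa [hσ] using hx.1, hσ⟩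

lemma sum_card_slice (A : Finset (Perm (Fin (k + 1)))) : ∑ i, #(slice A i) = #A := by
  simp only [card_slice]
  exact (card_eq_sum_card_fiberwise fun _ _ => mem_univ _).symm

lemma card_compl_slice (A : Finset (Perm (Fin (k + 1)))) (i : Fin (k + 1)) :
    #(slice A i)ᶜ = k.factorial - #(slice A i) := by
  rw [card_compl, Fintype.card_perm, Fintype.card_fin]

lemma mem_of_slice_eq_univ {A : Finset (Perm (Fin (k + 1)))} {x : Perm (Fin (k + 1))}
    (h : slice A (x (Fin.last k)) = univ) : x ∈ A := by
  obtain ⟨σ, hσ⟩ := exists_embed_eq x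
  rw [← hσ, ← mem_slice, h]
  exact mem_univ σ

lemma notMem_of_slice_eq_empty {A : Finset (Perm (Fin (k + 1)))} {x : Perm (Fin (k + 1))}
    (h : slice A (x (Fin.last k)) = ∅) : x ∉ A := by
  obtain ⟨σ, hσ⟩ := exists_embed_eq x
  rw [← hσ, ← mem_slice, h]
  exact notMem_empty σ

def crossGraph (k : ℕ) : SimpleGraph (Perm (Fin (k + 1))) where
  Adj x y := (BS (k + 1)).Adj x y ∧ x (Fin.last k) ≠ y (Fin.last k)
  symm := ⟨fun _ _ h => ⟨h.1.symm, h.2.symm⟩⟩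
  loopless := ⟨fun _ h => h.2 rfl⟩

@[simp]
lemma crossGraph_adj {x y : Perm (Fin (k + 1))} :
    (crossGraph k).Adj x y ↔ (BS (k + 1)).Adj x y ∧ x (Fin.last k) ≠ y (Fin.last k) :=
  Iff.rfl

instance : DecidableRel (crossGraph k).Adj := fun _ _ => inferInstanceAs (Decidable (_ ∧ _ ≠ _))

lemma card_interedges_eq_sum_slice_add (hk : 0 < k) (A : Finset (Perm (Fin (k + 1)))) :
    #((BS (k + 1)).interedges A Aᶜ) =
      ∑ i, #((BS k).interedges (slice A i) (slice A i)ᶜ) + #((crossGraph k).interedges A Aᶜ) := by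
  rw [← card_filter_add_card_filter_not
    (fun p : Perm (Fin (k + 1)) × Perm (Fin (k + 1)) => p.1 (Fin.last k) = p.2 (Fin.last k))]
  congr 1
  · rw [card_eq_sum_card_fiberwise (f := fun p => p.1 (Fin.last k)) (t := univ)
      fun _ _ => mem_univ _]
    refine sum_congr rfl fun i _ => (card_nbij (fun q => (embed i q.1, embed i q.2)) ?_ ?_ ?_).symm
    · rintro ⟨σ, τ⟩ h
      simp only [mem_coe, mem_interedges_iff, ← slice_compl, mem_slice, mem_filter] at h ⊢
      exact ⟨⟨⟨h.1, h.2.1, (adj_embed_iff hk i σ τ).2 h.2.2⟩, by simp⟩, by simp⟩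
    · rintro ⟨σ, τ⟩ - ⟨σ', τ'⟩ - h
      simp only [Prod.mk.injEq] at h
      exact Prod.ext (embed_injective i h.1) (embed_injective i h.2)
    · rintro ⟨x, y⟩ h
      simp only [coe_filter, Set.mem_ofPred_eq, mem_filter, mem_interedges_iff] at h
      obtain ⟨⟨⟨hx, hy, hxy⟩, hlast⟩, hi⟩ := h
      obtain ⟨σ, hσ⟩ := exists_embed_eq x
      obtain ⟨τ, hτ⟩ := exists_embed_eq y
      rw [hi] at hσ
      rw [← hlast, hi] at hτ
      refine ⟨(σ, τ), ?_, by simp [hσ, hτ]⟩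
      simp only [mem_coe, mem_interedges_iff, ← slice_compl, mem_slice, hσ, hτ]
      exact ⟨hx, hy, (adj_embed_iff hk i σ τ).1 (hσ ▸ hτ ▸ hxy)⟩
  · congr 1
    ext ⟨x, y⟩
    simp [mem_interedges_iff, and_assoc]

/-- The positions `p` for which `swap p (Fin.last k)` is a generator of `BS (k + 1)`. -/
def crossPositions (k : ℕ) : Finset (Fin (k + 1)) := {p | p.val + 1 = k ∨ p.val = 0}

lemma card_crossPositions (hk : 2 ≤ k) : #(crossPositions k) = 2 := by
  rw [show crossPositions k = {⟨k - 1, by omega⟩, 0} by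
    ext p
    simp only [crossPositions, mem_filter, mem_univ, true_and, mem_insert, mem_singleton,
      Fin.ext_iff, Fin.val_zero]
    omega]
  exact card_pair (by simp [Fin.ext_iff]; omega)

lemma ne_last_of_mem_crossPositions (hk : 0 < k) {p : Fin (k + 1)} (hp : p ∈ crossPositions k) :
    p ≠ Fin.last k := by
  simp only [crossPositions, mem_filter, mem_univ, true_and] at hp
  rintro rfl
  rw [Fin.val_last] at hp
  omega

lemma crossGraph_adj_mul_swap (hk : 0 < k) (x : Perm (Fin (k + 1))) {p : Fin (k + 1)}
    (hp : p ∈ crossPositions k) : (crossGraph k).Adj x (x * swap p (Fin.last k)) := by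
  have hpl := ne_last_of_mem_crossPositions hk hp
  simp only [crossPositions, mem_filter, mem_univ, true_and] at hp
  refine ⟨adj_mul_swap x (by rw [Fin.val_last]; omega) hpl, ?_⟩
  simpa using fun h => hpl (x.injective h).symm

lemma mul_card_le_card_interedges_crossGraph (hk : 2 ≤ k) {A : Finset (Perm (Fin (k + 1)))}
    {M : Finset (Fin (k + 1))} (hA : ∀ x ∈ A, x (Fin.last k) ∈ M) :
    (3 - #M) * #A ≤ #((crossGraph k).interedges A Aᶜ) := by
  rw [card_interedges_eq_sum, mul_comm, ← smul_eq_mul, ← sum_const]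
  refine sum_le_sum fun a ha => ?_
  have hin : #{q ∈ crossPositions k | a q ∈ M} ≤ #M - 1 := by
    rw [← card_erase_of_mem (hA a ha)]
    refine card_le_card_of_injOn a (fun q hq => ?_) a.injective.injOn
    simp only [coe_filter, Set.mem_ofPred_eq, mem_coe, mem_erase] at hq ⊢
    exact ⟨a.injective.ne (ne_last_of_mem_crossPositions (by omega) hq.1), hq.2⟩
  have hout : #{q ∈ crossPositions k | a q ∉ M} ≤ #{b ∈ Aᶜ | (crossGraph k).Adj a b} := by
    refine card_le_card_of_injOn (fun q => a * swap q (Fin.last k)) (fun q hq => ?_)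
      fun q _ q' _ h => a.injective (by simpa using congrArg (· (Fin.last k)) h)
    simp only [coe_filter, Set.mem_ofPred_eq, mem_compl] at hq ⊢
    exact ⟨fun hb => hq.2 (by simpa using hA _ hb), crossGraph_adj_mul_swap (by omega) a hq.1⟩
  have := card_filter_add_card_filter_not (s := crossPositions k) (fun q => a q ∈ M)
  rw [card_crossPositions hk] at this
  have := card_pos.2 ⟨_, hA a ha⟩
  omega

lemma four_le_card_interedges_crossGraph (hk : 3 ≤ k) {f e : Fin (k + 1)} (hfe : f ≠ e) :
    4 ≤ #((crossGraph k).interedges {x | x (Fin.last k) = f} {x | x (Fin.last k) = e}) := by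
  set S : Fin (k + 1) → Finset (Perm (Fin (k + 1))) := fun r => {x | x (Fin.last k) = f ∧ x r = e}
  set g : Fin (k + 1) → Perm (Fin (k + 1)) → Perm (Fin (k + 1)) × Perm (Fin (k + 1)) :=
    fun r x => (x, x * swap r (Fin.last k))
  have hS : ∀ r ∈ crossPositions k, 2 ≤ #((S r).image (g r)) := fun r hr => by
    rw [card_image_of_injective _ fun x y h => congrArg Prod.fst h]
    exact Perm.two_le_card_filter_apply_eq_apply_eq (by simp; omega)
      (ne_last_of_mem_crossPositions (by omega) hr).symm hfe
  have hdisj : (crossPositions k : Set (Fin (k + 1))).PairwiseDisjoint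
      fun r => (S r).image (g r) := by
    intro r _ r' _ hrr'
    simp only [Function.onFun, Finset.disjoint_left, mem_image, not_exists, not_and]
    rintro _ ⟨x, hx, rfl⟩ y hy h
    simp only [g, Prod.mk.injEq] at h
    simp only [S, mem_filter, mem_univ, true_and] at hx hy
    exact hrr' (x.injective (by rw [hx.2, ← h.1, hy.2]))
  have hsub : (crossPositions k).biUnion (fun r => (S r).image (g r)) ⊆
      (crossGraph k).interedges {x | x (Fin.last k) = f} {x | x (Fin.last k) = e} := by
    simp only [biUnion_subset, image_subset_iff]
    intro r hr x hx
    simp only [S, mem_filter, mem_univ, true_and] at hx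
    have := (crossGraph_adj_mul_swap (by omega) x hr).1
    simp [g, mem_interedges_iff, hx, this, hfe]
  calc 4 = ∑ _r ∈ crossPositions k, 2 := by simp [card_crossPositions (by omega : 2 ≤ k)]
    _ ≤ ∑ r ∈ crossPositions k, #((S r).image (g r)) := sum_le_sum hS
    _ = _ := (card_biUnion hdisj).symm
    _ ≤ _ := card_le_card hsub

lemma four_mul_card_mul_card_le_card_interedges_crossGraph (hk : 3 ≤ k)
    {A : Finset (Perm (Fin (k + 1)))} {Fu Em : Finset (Fin (k + 1))}
    (hFu : ∀ x, x (Fin.last k) ∈ Fu → x ∈ A) (hEm : ∀ x, x (Fin.last k) ∈ Em → x ∉ A) :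
    4 * (#Fu * #Em) ≤ #((crossGraph k).interedges A Aᶜ) := by
  set copy : Fin (k + 1) → Finset (Perm (Fin (k + 1))) := fun i => {x | x (Fin.last k) = i}
  have hne : ∀ fe ∈ Fu ×ˢ Em, fe.1 ≠ fe.2 := by
    rintro ⟨f, e⟩ hfe (rfl : f = e)
    rw [mem_product] at hfe
    exact hEm (swap (Fin.last k) f) (by simpa using hfe.2) (hFu _ (by simpa using hfe.1))
  have hdisj : ((Fu ×ˢ Em : Finset _) : Set (Fin (k + 1) × Fin (k + 1))).PairwiseDisjoint
      fun fe => (crossGraph k).interedges (copy fe.1) (copy fe.2) := by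
    rintro ⟨f, e⟩ _ ⟨f', e'⟩ _ hne'
    simp only [Function.onFun, Finset.disjoint_left]
    rintro ⟨x, y⟩ h h'
    simp only [copy, mem_interedges_iff, mem_filter, mem_univ, true_and] at h h'
    exact hne' (Prod.ext (h.1.symm.trans h'.1) (h.2.1.symm.trans h'.2.1))
  have hsub : (crossGraph k).interedges (Fu.biUnion copy) (Em.biUnion copy) ⊆
      (crossGraph k).interedges A Aᶜ := by
    refine interedges_mono _ ?_ ?_ <;> intro x hx <;>
      simp only [copy, mem_biUnion, mem_filter, mem_univ, true_and, mem_compl] at hx ⊢ <;>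
      obtain ⟨i, hi, rfl⟩ := hx
    exacts [hFu x hi, hEm x hi]
  calc 4 * (#Fu * #Em) = ∑ _fe ∈ Fu ×ˢ Em, 4 := by simp [card_product, mul_comm]
    _ ≤ ∑ fe ∈ Fu ×ˢ Em, #((crossGraph k).interedges (copy fe.1) (copy fe.2)) :=
        sum_le_sum fun fe hfe => four_le_card_interedges_crossGraph hk (hne fe hfe)
    _ = _ := (card_biUnion hdisj).symm
    _ = _ := by rw [interedges_biUnion]
    _ ≤ _ := card_le_card hsub

/-! ### The isoperimetric inequality -/

lemma card_mul_le_sum_card_interedges_slice (hk : 3 ≤ k) (IH : IsoperimetricBound k)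
    {A : Finset (Perm (Fin (k + 1)))} {M : Finset (Fin (k + 1))}
    (hM : ∀ i ∈ M, slice A i ≠ ∅ ∧ slice A i ≠ univ) :
    #M * (2 * k - 3) ≤ ∑ i, #((BS k).interedges (slice A i) (slice A i)ᶜ) :=
  (card_nsmul_le_sum M _ _ fun i hi => IH.two_mul_sub_three_le hk
    (nonempty_iff_ne_empty.2 (hM i hi).1)
    (nonempty_iff_ne_empty.2 ((compl_eq_empty_iff _).not.2 (hM i hi).2))).trans
    (sum_le_sum_of_subset (subset_univ M))

lemma four_mul_sub_eight_le_of_slice_ne_univ (hk : 3 ≤ k) (IH : IsoperimetricBound k)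
    {A : Finset (Perm (Fin (k + 1)))} (hA : 3 ≤ #A) (hfull : ∀ i, slice A i ≠ univ) :
    4 * (k + 1) - 8 ≤ #((BS (k + 1)).interedges A Aᶜ) := by
  set M : Finset (Fin (k + 1)) := {i | slice A i ≠ ∅}
  have hM : ∀ x ∈ A, x (Fin.last k) ∈ M := fun x hx => by
    simpa [M] using fun h => notMem_of_slice_eq_empty h hx
  have hcross := mul_card_le_card_interedges_crossGraph (by omega) hM
  have hsplit := card_interedges_eq_sum_slice_add (by omega) A
  have hsum := card_mul_le_sum_card_interedges_slice hk IH (A := A) (M := M)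
    fun i hi => ⟨by simpa [M] using hi, hfull i⟩
  have hcardA : #A = ∑ i ∈ M, #(slice A i) := by
    rw [← sum_card_slice, ← sum_subset (subset_univ M)]
    intro i _ hi
    simpa [M] using hi
  rcases (by omega : #M = 0 ∨ #M = 1 ∨ #M = 2 ∨ 3 ≤ #M) with hM0 | hM1 | hM2 | hM3
  · rw [card_eq_zero.1 hM0, sum_empty] at hcardA
    omega
  · obtain ⟨i, hi⟩ := card_eq_one.1 hM1
    rw [hi, sum_singleton] at hcardA
    rw [hM1] at hcross hsum
    have hcompl := card_compl_slice A i
    have hpos := card_pos.2 (nonempty_iff_ne_empty.2 ((compl_eq_empty_iff _).not.2 (hfull i)))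
    by_cases h2 : 2 ≤ #(slice A i)ᶜ
    · have := IH.four_mul_sub_eight_le hk (A := slice A i) (by omega) h2
      have := single_le_sum (fun j _ => Nat.zero_le
        (#((BS k).interedges (slice A j) (slice A j)ᶜ))) (mem_univ i)
      omega
    · -- `A` is the copy `i` minus one vertex, so `#A = k! - 1 ≥ k`.
      have := Nat.lt_factorial_self hk
      omega
  · rw [hM2] at hsum hcross
    omega
  · have := Nat.mul_le_mul_right (2 * k - 3) hM3
    omega

lemma four_mul_sub_eight_le_of_slice_eq_univ_of_slice_eq_empty (hk : 3 ≤ k)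
    (IH : IsoperimetricBound k) {A : Finset (Perm (Fin (k + 1)))} {f e : Fin (k + 1)}
    (hf : slice A f = univ) (he : slice A e = ∅) :
    4 * (k + 1) - 8 ≤ #((BS (k + 1)).interedges A Aᶜ) := by
  set Fu : Finset (Fin (k + 1)) := {i | slice A i = univ}
  set Em : Finset (Fin (k + 1)) := {i | slice A i = ∅}
  have hFuEm : Disjoint Fu Em := disjoint_filter.2 fun i _ h h' =>
    (univ_nonempty (α := Perm (Fin k))).ne_empty (h.symm.trans h')
  have hcard : #(Fu ∪ Em)ᶜ + #Fu + #Em = k + 1 := by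
    have := card_le_univ (Fu ∪ Em)
    rw [Fintype.card_fin, card_union_of_disjoint hFuEm] at this
    rw [card_compl, card_union_of_disjoint hFuEm, Fintype.card_fin]
    omega
  have hFu : 1 ≤ #Fu := card_pos.2 ⟨f, by simpa [Fu] using hf⟩
  have hEm : 1 ≤ #Em := card_pos.2 ⟨e, by simpa [Em] using he⟩
  have hcross := four_mul_card_mul_card_le_card_interedges_crossGraph hk (A := A) (Fu := Fu)
    (Em := Em) (fun x hx => mem_of_slice_eq_univ (by simpa [Fu] using hx))
    (fun x hx => notMem_of_slice_eq_empty (by simpa [Em] using hx))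
  have hsum := card_mul_le_sum_card_interedges_slice hk IH (A := A) (M := (Fu ∪ Em)ᶜ)
    fun i hi => by simpa [Fu, Em, and_comm] using hi
  have hsplit := card_interedges_eq_sum_slice_add (by omega) A
  have hprod : #Fu + #Em ≤ #Fu * #Em + 1 := by nlinarith
  have : #(Fu ∪ Em)ᶜ * 4 ≤ #(Fu ∪ Em)ᶜ * (2 * k - 3) + 4 := by
    rcases (by omega : k = 3 ∨ 4 ≤ k) with rfl | hk4
    · omega
    · have := Nat.mul_le_mul_left #(Fu ∪ Em)ᶜ (show 4 ≤ 2 * k - 3 by omega)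
      omega
  omega

lemma IsoperimetricBound.succ (hk : 3 ≤ k) (IH : IsoperimetricBound k) :
    IsoperimetricBound (k + 1) := by
  intro A hA hAc
  by_cases hfull : ∃ f, slice A f = univ
  · obtain ⟨f, hf⟩ := hfull
    by_cases hempty : ∃ e, slice A e = ∅
    · obtain ⟨e, he⟩ := hempty
      exact four_mul_sub_eight_le_of_slice_eq_univ_of_slice_eq_empty hk IH hf he
    · rw [← card_interedges_compl_comm]
      refine four_mul_sub_eight_le_of_slice_ne_univ hk IH hAc fun i h => hempty ⟨i, ?_⟩
      rwa [slice_compl, compl_eq_univ_iff] at h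
  · exact four_mul_sub_eight_le_of_slice_ne_univ hk IH hA (not_exists.1 hfull)

theorem isoperimetricBound {n : ℕ} (hn : 3 ≤ n) : IsoperimetricBound n := by
  induction n, hn using Nat.le_induction with
  | base =>
    intro A hA hAc
    have hA3 : #A = 3 := by
      have := card_add_card_compl A
      rw [Fintype.card_perm, Fintype.card_fin, show Nat.factorial 3 = 6 from rfl] at this
      omega
    have := (BS 3).sum_degree_le_card_interedges_of_cliqueFree cliqueFree_three hA3
    simp only [degree_eq (by norm_num : 2 ≤ 3), sum_const, hA3, smul_eq_mul] at this
    omega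
  | succ k hk IH => exact IH.succ hk

end BS

theorem BS_fault_tolerant_Menger_general (n : ℕ) (hn : 3 ≤ n)
    (F : Set (Sym2 (Equiv.Perm (Fin n))))
    (hcard : F.ncard ≤ 2 * n - 5) (u v : Equiv.Perm (Fin n)) (huv : u ≠ v) :
    HasEdgeDisjointPaths ((BS n).deleteEdges F) u v
      (min (deg ((BS n).deleteEdges F) u) (deg ((BS n).deleteEdges F) v)) := by
  classical
  have hdeg := BS.degree_eq (n := n) (by omega)
  refine ((BS n).deleteEdges F).hasEdgeDisjointPaths_min_deg huv (fun w => ?_) fun A hA hAc => ?_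
  · have := (BS n).degree_le_degree_deleteEdges_add F w
    rw [hdeg] at this
    omega
  · have := (BS n).card_interedges_le_card_interedges_deleteEdges_add F A
    have := BS.isoperimetricBound hn A hA hAc
    have := degree_le_of_le (v := u) (deleteEdges_le (G := BS n) F)
    rw [hdeg] at this
    omega

/-- For `n ≥ 3`, `BS_n` is `(2n-5)`-edge-fault-tolerant strongly Menger edge connected:
after deleting any set of at most `2n - 5` edges, any two distinct vertices `u, v` are
joined by `min{d(u), d(v)}` pairwise edge-disjoint paths. -/
theorem BS_fault_tolerant_Menger (n : ℕ) (hn : 3 ≤ n)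
    (F : Set (Sym2 (Equiv.Perm (Fin n)))) (hF : F ⊆ (BS n).edgeSet)
    (hcard : F.ncard ≤ 2 * n - 5) (u v : Equiv.Perm (Fin n)) (huv : u ≠ v) :
    HasEdgeDisjointPaths ((BS n).deleteEdges F) u v
      (min (deg ((BS n).deleteEdges F) u) (deg ((BS n).deleteEdges F) v)) :=
  BS_fault_tolerant_Menger_general n hn F hcard u v huv
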